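/- (Theorem 3.2) For every finite simple graph G with vertex set V and edge set E, every positive integer q, and all real J and β with v := exp(βJ) − 1 ≠ 0, the Potts model partition function satisfies P₁(G;q,β) = q^{k(G)} · v^{|V| − k(G)} · t(G; (q+v)/v, v+1), where t is the Tutte polynomial given by its spanning-subgraph expansion t(G;x,y) = ∑_{A ⊆ E} (x−1)^{k(A) − k(G)} (y−1)^{|A| − |V| + k(A)}. -/

import Mathlib

/-!
Writing `v = exp(βJ) - 1`, each edge contributes the factor `1 + v·[σ i = σ j]` to the
Boltzmann weight. Expanding the product over the edges and summing over `σ` first gives the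
Fortuin–Kasteleyn form `∑_{A ⊆ E} v^{|A|} q^{k(A)}`, since a colouring constant along the edges
of `A` is exactly a colouring of the components of `(V, A)`. Substituting `x - 1 = q/v` and
`y - 1 = v` into the spanning-subgraph expansion of `t`, each term equals
`q^{k(A)} v^{|A|}` up to the common factor `q^{k(G)} v^{|V| - k(G)}`.
-/

open Finset

/-- Number of connected components of the spanning subgraph `(V, A)`. -/
noncomputable def numComp {V : Type*} [Fintype V] (A : Finset (Sym2 V)) : ℕ :=
  Nat.card (SimpleGraph.fromEdgeSet (A : Set (Sym2 V))).ConnectedComponent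

/-- Hamiltonian `h₁(σ) = −J·|{e = {i,j} ∈ E : σ i = σ j}|`. -/
noncomputable def hamOne {V : Type*} [Fintype V] [DecidableEq V]
    (G : SimpleGraph V) [DecidableRel G.Adj] (J : ℝ) {q : ℕ} (σ : V → Fin q) : ℝ :=
  -J * ((G.edgeFinset.filter fun e => (e.map σ).IsDiag).card : ℝ)

/-- The Tutte polynomial via its spanning-subgraph expansion:
`t(G;x,y) = ∑_{A ⊆ E} (x−1)^{k(A) − k(G)} (y−1)^{|A| − |V| + k(A)}`. -/
noncomputable def tutte {V : Type*} [Fintype V] [DecidableEq V]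
    (G : SimpleGraph V) [DecidableRel G.Adj] (x y : ℝ) : ℝ :=
  ∑ A ∈ G.edgeFinset.powerset,
    (x - 1) ^ ((numComp A : ℤ) - (numComp G.edgeFinset : ℤ)) *
      (y - 1) ^ ((A.card : ℤ) - (Fintype.card V : ℤ) + (numComp A : ℤ))

noncomputable def randomClusterPartition {V R : Type*} [Fintype V] [CommSemiring R]
    (A : Finset (Sym2 V)) (q v : R) : R :=
  ∑ B ∈ A.powerset, q ^ numComp B * v ^ B.card

namespace SimpleGraph

variable {V α : Type*}

theorem Reachable.eq_of_forall_adj {H : SimpleGraph V} {σ : V → α}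
    (hσ : ∀ ⦃u w⦄, H.Adj u w → σ u = σ w) {u w : V} (h : H.Reachable u w) : σ u = σ w := by
  obtain ⟨p⟩ := h
  induction p with
  | nil => rfl
  | cons hadj _ ih => exact (hσ hadj).trans ih

def constOnAdjEquiv (H : SimpleGraph V) :
    {σ : V → α // ∀ ⦃u w⦄, H.Adj u w → σ u = σ w} ≃ (H.ConnectedComponent → α) where
  toFun σ := ConnectedComponent.lift σ.1 fun _ _ p _ => p.reachable.eq_of_forall_adj σ.2
  invFun f := ⟨fun u => f (H.connectedComponentMk u), fun _ _ h => congrArg f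
    (ConnectedComponent.sound h.reachable)⟩
  left_inv _ := rfl
  right_inv _ := funext fun c => c.ind fun _ => rfl

end SimpleGraph

section Colorings

open SimpleGraph

variable {V α : Type*}

theorem forall_mem_isDiag_map_iff (A : Finset (Sym2 V)) (σ : V → α) :
    (∀ e ∈ A, (e.map σ).IsDiag) ↔
      ∀ ⦃u w⦄, (fromEdgeSet (A : Set (Sym2 V))).Adj u w → σ u = σ w := by
  constructor
  · intro h u w huw
    simpa using h _ ((fromEdgeSet_adj _).1 huw).1
  · intro h e he
    induction e with
    | _ u w =>
      by_cases huw : u = w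
      · simp [huw]
      · exact Sym2.mk_isDiag_iff.2 (h ((fromEdgeSet_adj _).2 ⟨he, huw⟩))

theorem card_filter_forall_isDiag_map [Fintype V] [DecidableEq V] [Fintype α] [DecidableEq α]
    (A : Finset (Sym2 V)) :
    #{σ : V → α | ∀ e ∈ A, (e.map σ).IsDiag} = Fintype.card α ^ numComp A := by
  rw [← Fintype.card_subtype, ← Nat.card_eq_fintype_card, Nat.card_congr
    ((Equiv.subtypeEquivRight (forall_mem_isDiag_map_iff A)).trans (constOnAdjEquiv _)),
    Nat.card_fun, Nat.card_eq_fintype_card, numComp]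

theorem sum_prod_one_add_ite_isDiag_map {R : Type*} [CommSemiring R] [Fintype V]
    [DecidableEq V] [Fintype α] [DecidableEq α] (A : Finset (Sym2 V)) (v : R) :
    ∑ σ : V → α, ∏ e ∈ A, (1 + if (e.map σ).IsDiag then v else 0) =
      randomClusterPartition A (Fintype.card α : R) v := by
  simp_rw [prod_one_add, prod_ite_zero, prod_const]
  rw [sum_comm, randomClusterPartition]
  refine sum_congr rfl fun B _ => ?_
  rw [sum_ite, sum_const_zero, add_zero, sum_const, card_filter_forall_isDiag_map, nsmul_eq_mul,
    Nat.cast_pow]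

end Colorings

section Graph

variable {V : Type*} [Fintype V] [DecidableEq V] (G : SimpleGraph V) [DecidableRel G.Adj]

theorem exp_neg_mul_hamOne (J β : ℝ) {q : ℕ} (σ : V → Fin q) :
    Real.exp (-β * hamOne G J σ) =
      ∏ e ∈ G.edgeFinset, (1 + if (e.map σ).IsDiag then Real.exp (β * J) - 1 else 0) := by
  simp only [add_ite, add_sub_cancel, add_zero]
  rw [prod_ite, prod_const, prod_const_one, mul_one, hamOne, ← Real.exp_nat_mul]
  ring_nf

theorem randomClusterPartition_eq_tutte {q v : ℝ} (hq : q ≠ 0) (hv : v ≠ 0) :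
    randomClusterPartition G.edgeFinset q v =
      q ^ numComp G.edgeFinset * v ^ ((Fintype.card V : ℤ) - numComp G.edgeFinset) *
        tutte G ((q + v) / v) (v + 1) := by
  rw [tutte, mul_sum, randomClusterPartition]
  refine sum_congr rfl fun B _ => ?_
  rw [show (q + v) / v - 1 = q / v by field_simp; ring, add_sub_cancel_right]
  simp only [div_zpow, zpow_sub₀ hq, zpow_sub₀ hv, zpow_add₀ hv, zpow_natCast]
  field_simp

end Graph

/-- **Theorem 3.2.** With `v = exp(βJ) − 1 ≠ 0`,
`P₁(G;q,β) = q^{k(G)} · v^{|V| − k(G)} · t(G; (q+v)/v, v+1)`. -/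
theorem potts_eq_tutte {V : Type*} [Fintype V] [DecidableEq V]
    (G : SimpleGraph V) [DecidableRel G.Adj] (q : ℕ) (hq : 0 < q) (J β : ℝ)
    (v : ℝ) (hv : v = Real.exp (β * J) - 1) (hv0 : v ≠ 0) :
    (∑ σ : V → Fin q, Real.exp (-β * hamOne G J σ)) =
      (q : ℝ) ^ (numComp G.edgeFinset) *
        v ^ ((Fintype.card V : ℤ) - (numComp G.edgeFinset : ℤ)) *
        tutte G (((q : ℝ) + v) / v) (v + 1) := by
  simp_rw [exp_neg_mul_hamOne, ← hv]
  rw [sum_prod_one_add_ite_isDiag_map, Fintype.card_fin,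
    randomClusterPartition_eq_tutte G (Nat.cast_ne_zero.2 hq.ne') hv0]
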